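/- arXiv:2605.30254 — 4 statements merged into one kernel-verified Lean document; each statement's English description precedes it below -/
import Mathlib

section
/- For every probability density η on [-R,R] (i.e. η ≥ 0 with ∫_{-R}^R η = 1) that is bounded above by M > 0, the variance satisfies Var_η(t) := ∫_{-R}^R (t - t̄)² η(t) dt ≥ 1/(12 M²), where t̄ = ∫_{-R}^R t η(t) dt. -/
/-!
Bathtub principle: among densities bounded by `M`, the second moment about a point `x₀` is
smallest for `M` times the indicator of an interval of length `1/M` centred at `x₀`, whose
second moment is `1/(12M²)`. Quantitatively, for every `c ≥ 0` the pointwise inequality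
`c² f - M (c² - (t - x₀)²)₊ ≤ (t - x₀)² f` (valid whenever `0 ≤ f ≤ M`) integrates to
`c² - 4Mc³/3 ≤ ∫ (t - x₀)² f`, and `c = 1/(2M)` gives the bound. The point `x₀` is arbitrary,
so in particular it may be the mean.
-/

open MeasureTheory intervalIntegral

theorem sub_mul_sub_max_le {a s y M : ℝ} (hy : 0 ≤ y) (hyM : y ≤ M) :
    a * y - M * max (a - s) 0 ≤ s * y := by
  rcases le_total (a - s) 0 with h | h
  · rw [max_eq_right h]; nlinarith
  · rw [max_eq_left h]; nlinarith

theorem max_sq_sub_sq_sub_eq_zero {c t x₀ : ℝ} (hc : 0 ≤ c)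
    (ht : t ∉ Set.Icc (x₀ - c) (x₀ + c)) :
    max (c ^ 2 - (t - x₀) ^ 2) 0 = 0 := by
  rw [Set.mem_Icc, not_and_or, not_le, not_le] at ht
  exact max_eq_right (by rcases ht with h | h <;> nlinarith)

theorem integral_max_sq_sub_sq_sub {c : ℝ} (hc : 0 ≤ c) (x₀ : ℝ) :
    ∫ t, max (c ^ 2 - (t - x₀) ^ 2) 0 = 4 * c ^ 3 / 3 := by
  rw [integral_sub_right_eq_self (fun t => max (c ^ 2 - t ^ 2) 0) x₀,
    ← setIntegral_eq_integral_of_forall_compl_eq_zero (s := Set.Icc (-c) c)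
      fun t ht => by simpa using max_sq_sub_sq_sub_eq_zero (x₀ := 0) hc (by simpa using ht),
    integral_Icc_eq_integral_Ioc, ← integral_of_le (by linarith),
    integral_congr (g := fun t => c ^ 2 - t ^ 2)]
  · rw [intervalIntegral.integral_sub intervalIntegrable_const (intervalIntegrable_pow 2),
      intervalIntegral.integral_const, integral_pow]
    simp only [smul_eq_mul]
    ring
  · intro t ht
    rw [Set.uIcc_of_le (by linarith), Set.mem_Icc] at ht
    exact max_eq_left (by nlinarith)

theorem le_setIntegral_sq_sub_mul {s : Set ℝ} {f : ℝ → ℝ} {M c : ℝ} (hs : MeasurableSet s)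
    (hM : 0 ≤ M) (hc : 0 ≤ c) (hf₀ : ∀ t ∈ s, 0 ≤ f t) (hfM : ∀ t ∈ s, f t ≤ M)
    (hf : IntegrableOn f s) (hf₁ : ∫ t in s, f t = 1) (x₀ : ℝ)
    (hvar : IntegrableOn (fun t => (t - x₀) ^ 2 * f t) s) :
    c ^ 2 - 4 * M * c ^ 3 / 3 ≤ ∫ t in s, (t - x₀) ^ 2 * f t := by
  set g : ℝ → ℝ := fun t => max (c ^ 2 - (t - x₀) ^ 2) 0
  have hg : Integrable g :=
    Continuous.integrable_of_hasCompactSupport (by fun_prop)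
      (HasCompactSupport.intro isCompact_Icc fun _ => max_sq_sub_sq_sub_eq_zero hc)
  have hg_le : ∫ t in s, g t ≤ 4 * c ^ 3 / 3 :=
    (setIntegral_le_integral hg (ae_of_all _ fun t => le_max_right _ _)).trans_eq
      (integral_max_sq_sub_sq_sub hc x₀)
  calc c ^ 2 - 4 * M * c ^ 3 / 3
      ≤ c ^ 2 * (∫ t in s, f t) - M * ∫ t in s, g t := by rw [hf₁]; nlinarith
    _ = ∫ t in s, (c ^ 2 * f t - M * g t) := by
      rw [integral_sub (hf.const_mul _) (hg.integrableOn.const_mul _),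
        MeasureTheory.integral_const_mul, MeasureTheory.integral_const_mul]
    _ ≤ ∫ t in s, (t - x₀) ^ 2 * f t :=
      setIntegral_mono_on ((hf.const_mul _).sub (hg.integrableOn.const_mul _)) hvar hs
        fun t ht => sub_mul_sub_max_le (hf₀ t ht) (hfM t ht)

theorem variance_lower_bound_general (R M : ℝ) (hR : 0 < R) (hM : 0 < M)
    (η : ℝ → ℝ)
    (hnn : ∀ t ∈ Set.Icc (-R) R, 0 ≤ η t)
    (hub : ∀ t ∈ Set.Icc (-R) R, η t ≤ M)
    (hint : IntervalIntegrable η volume (-R) R)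
    (hprob : (∫ t in (-R)..R, η t) = 1) :
    1 / (12 * M ^ 2) ≤
      ∫ t in (-R)..R, (t - ∫ s in (-R)..R, s * η s) ^ 2 * η t := by
  set mean := ∫ s in (-R)..R, s * η s
  have hvar : IntervalIntegrable (fun t => (t - mean) ^ 2 * η t) volume (-R) R :=
    hint.continuousOn_mul (by fun_prop)
  rw [integral_of_le (by linarith)] at hprob ⊢
  -- `c ↦ c² - 4Mc³/3` is maximal at `c = 1/(2M)`, where it equals `1/(12M²)`.
  calc 1 / (12 * M ^ 2) = (1 / (2 * M)) ^ 2 - 4 * M * (1 / (2 * M)) ^ 3 / 3 := by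
        field_simp; ring
    _ ≤ _ := le_setIntegral_sq_sub_mul measurableSet_Ioc hM.le (by positivity)
        (fun t ht => hnn t (Set.Ioc_subset_Icc_self ht))
        (fun t ht => hub t (Set.Ioc_subset_Icc_self ht)) hint.1 hprob mean hvar.1

/-- Bathtub-principle variance lower bound: a probability density on `[-R, R]`
bounded by `M` has variance at least `1/(12 M²)`. -/
theorem variance_lower_bound (R M : ℝ) (hR : 0 < R) (hM : 0 < M)
    (η : ℝ → ℝ)
    (hmeas : Measurable η)
    (hnn : ∀ t ∈ Set.Icc (-R) R, 0 ≤ η t)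
    (hub : ∀ t ∈ Set.Icc (-R) R, η t ≤ M)
    (hint : IntervalIntegrable η volume (-R) R)
    (hprob : (∫ t in (-R)..R, η t) = 1) :
    1 / (12 * M ^ 2) ≤
      ∫ t in (-R)..R, (t - ∫ s in (-R)..R, s * η s) ^ 2 * η t :=
  variance_lower_bound_general R M hR hM η hnn hub hint hprob
end

section
/- Let b > 0, L > 0, and let v : [0,L] → ℝ be continuously differentiable with v(0) = 0. Then ∫_0^L v(t)² e^{-bt} dt ≤ (4/b²) ∫_0^L v'(t)² e^{-bt} dt. -/
/-!
With `w(t) = e^{-bt}` one has `(w v²)' = w (2 v v' - b v²)`, and completing the square gives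
`(4/b²) w v'² - w v² = w ((2/b) v' - v)² + (2/b) (w v²)'`. Integrating over `[0, L]`, the
square term is nonnegative and the boundary term is `(2/b) e^{-bL} v(L)² ≥ 0` because `v(0) = 0`.
-/

open MeasureTheory intervalIntegral Set

section WeightedHardy

variable {b : ℝ} {v v' : ℝ → ℝ}

lemma hasDerivAt_exp_neg_mul_mul_sq {t : ℝ} (hv : HasDerivAt v (v' t) t) :
    HasDerivAt (fun s => Real.exp (-b * s) * v s ^ 2)
      (Real.exp (-b * t) * (2 * v t * v' t - b * v t ^ 2)) t := by
  have hexp : HasDerivAt (fun s => Real.exp (-b * s)) (Real.exp (-b * t) * -b) t := by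
    simpa using ((hasDerivAt_id t).const_mul (-b)).exp
  exact (hexp.fun_mul (hv.fun_pow 2)).congr_deriv (by norm_num; ring)

lemma exp_neg_mul_mul_sq_sub_le_integral (hb : b ≠ 0) {a c : ℝ} (hac : a ≤ c)
    (hderiv : ∀ t ∈ Icc a c, HasDerivAt v (v' t) t) (hcont : ContinuousOn v' (Icc a c)) :
    2 / b * (Real.exp (-b * c) * v c ^ 2) - 2 / b * (Real.exp (-b * a) * v a ^ 2) ≤
      ∫ t in a..c,
        (4 / b ^ 2 * (v' t ^ 2 * Real.exp (-b * t)) - v t ^ 2 * Real.exp (-b * t)) := by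
  have hvcont : ContinuousOn v (Icc a c) := HasDerivAt.continuousOn hderiv
  refine sub_le_integral_of_hasDeriv_right_of_le hac (by fun_prop)
    (fun t ht => ((hasDerivAt_exp_neg_mul_mul_sq (hderiv t (Ioo_subset_Icc_self ht))).const_mul
      (2 / b)).hasDerivWithinAt) (ContinuousOn.integrableOn_Icc (by fun_prop)) (fun t _ => ?_)
  calc 2 / b * (Real.exp (-b * t) * (2 * v t * v' t - b * v t ^ 2))
      = Real.exp (-b * t) * (2 * v t * (2 / b * v' t) - 2 * v t ^ 2) := by field_simp
    _ ≤ Real.exp (-b * t) * (v t ^ 2 + (2 / b * v' t) ^ 2 - 2 * v t ^ 2) := by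
      gcongr
      exact two_mul_le_add_sq _ _
    _ = 4 / b ^ 2 * (v' t ^ 2 * Real.exp (-b * t)) - v t ^ 2 * Real.exp (-b * t) := by ring

end WeightedHardy

/-- Weighted one-dimensional Hardy-type inequality with exponential weight:
if `v(0) = 0`, then `∫₀ᴸ v² e^{-bt} ≤ (4/b²) ∫₀ᴸ (v')² e^{-bt}`. -/
theorem weighted_hardy_exponential (b L : ℝ) (hb : 0 < b) (hL : 0 < L)
    (v v' : ℝ → ℝ)
    (hderiv : ∀ t ∈ Set.Icc (0 : ℝ) L, HasDerivAt v (v' t) t)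
    (hcont : ContinuousOn v' (Set.Icc (0 : ℝ) L))
    (hv0 : v 0 = 0) :
    (∫ t in (0 : ℝ)..L, (v t) ^ 2 * Real.exp (-b * t)) ≤
      (4 / b ^ 2) * ∫ t in (0 : ℝ)..L, (v' t) ^ 2 * Real.exp (-b * t) := by
  have hvcont : ContinuousOn v (Icc 0 L) := HasDerivAt.continuousOn hderiv
  have hint : ∀ f : ℝ → ℝ, ContinuousOn f (Icc 0 L) →
      IntervalIntegrable (fun t => f t ^ 2 * Real.exp (-b * t)) volume 0 L := fun f hf =>
    ContinuousOn.intervalIntegrable (by rw [uIcc_of_le hL.le]; fun_prop)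
  have key := exp_neg_mul_mul_sq_sub_le_integral hb.ne' hL.le hderiv hcont
  rw [integral_sub ((hint v' hcont).const_mul _) (hint v hvcont),
    intervalIntegral.integral_const_mul, hv0, zero_pow two_ne_zero, mul_zero, mul_zero,
    sub_zero] at key
  have hboundary : 0 ≤ 2 / b * (Real.exp (-b * L) * v L ^ 2) := by positivity
  linarith
end

section
/- Let h : [0,L] → ℝ be continuous and positive, and let n ≥ 2 be an integer. For any 0 < r < L, define φ_r(t) = 1 for 0 ≤ t ≤ r and φ_r(t) = (∫_t^L h(s)^{1-n} ds) / (∫_r^L h(s)^{1-n} ds) for r ≤ t ≤ L. Then the Rayleigh quotient satisfies (∫_0^L h(t)^{n-1} φ_r'(t)² dt) / (∫_0^L h(t)^{n-1} φ_r(t)² dt) ≤ (∫_0^r h(t)^{1-n} dt) / (r² ∫_r^L h(t)^{1-n} dt). -/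
/-!
Write `w = h^(n-1)` and `g = h^(1-n) = 1/w`. On `(r, L)` the weighted derivative `w φ_r'` is the
constant `-1/D` with `D = ∫_r^L g`, so the energy is `∫_r^L w φ_r'² = ∫_r^L g / D² = 1/D`. The mass
is at least `∫_0^r w`, and `r² = (∫_0^r √w √g)² ≤ ∫_0^r w · ∫_0^r g` by Cauchy–Schwarz.
-/

open MeasureTheory intervalIntegral Set

section

variable {w g : ℝ → ℝ} {a b r L : ℝ}

/-- Cauchy–Schwarz for `√w · √g = 1`, read off from the discriminant of the nonnegative quadratic
`k ↦ ∫ w (1 - k g)²`. -/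
theorem sq_sub_le_integral_mul_integral_of_mul_eq_one (hab : a ≤ b)
    (hw : IntervalIntegrable w volume a b) (hg : IntervalIntegrable g volume a b)
    (hw0 : ∀ t ∈ Icc a b, 0 ≤ w t) (hwg : ∀ t ∈ Icc a b, w t * g t = 1) :
    (b - a) ^ 2 ≤ (∫ t in a..b, w t) * ∫ t in a..b, g t := by
  have hquad : ∀ k : ℝ,
      0 ≤ (∫ t in a..b, g t) * (k * k) + (-2 * (b - a)) * k + ∫ t in a..b, w t := by
    intro k
    calc 0 ≤ ∫ t in a..b, w t * (1 - k * g t) ^ 2 :=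
          integral_nonneg hab fun t ht => mul_nonneg (hw0 t ht) (sq_nonneg _)
      _ = ∫ t in a..b, (w t + k ^ 2 * g t - 2 * k) := by
          refine integral_congr fun t ht => ?_
          rw [uIcc_of_le hab] at ht
          linear_combination (k ^ 2 * g t - 2 * k) * hwg t ht
      _ = _ := by
          rw [integral_sub (hw.add (hg.const_mul _)) intervalIntegrable_const,
            integral_add hw (hg.const_mul _), intervalIntegral.integral_const_mul,
            intervalIntegral.integral_const, smul_eq_mul]
          ring
  have := discrim_le_zero hquad
  rw [discrim] at this
  linarith

/-- The paper's `φ_r`: for `g = 1/w` it is the solution of `(w φ')' = 0` on `(r, L)` with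
`φ(r) = 1`, `φ(L) = 0`, extended by `1` to the left of `r`. -/
noncomputable def capacitaryPotential (g : ℝ → ℝ) (r L : ℝ) (t : ℝ) : ℝ :=
  if t ≤ r then 1 else (∫ s in t..L, g s) / ∫ s in r..L, g s

theorem capacitaryPotential_of_le {t : ℝ} (ht : t ≤ r) : capacitaryPotential g r L t = 1 :=
  if_pos ht

theorem capacitaryPotential_of_lt {t : ℝ} (ht : r < t) :
    capacitaryPotential g r L t = (∫ s in t..L, g s) / ∫ s in r..L, g s :=
  if_neg ht.not_ge

theorem deriv_capacitaryPotential_of_lt {t : ℝ} (ht : t < r) :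
    deriv (capacitaryPotential g r L) t = 0 := by
  have hloc : capacitaryPotential g r L =ᶠ[nhds t] fun _ => 1 :=
    Filter.eventually_of_mem (Iio_mem_nhds ht) fun _ hs => capacitaryPotential_of_le (le_of_lt hs)
  rw [hloc.deriv_eq, deriv_const]

theorem deriv_capacitaryPotential_of_mem_Ioo (hg : ContinuousOn g (Icc r L)) {t : ℝ}
    (ht : t ∈ Ioo r L) :
    deriv (capacitaryPotential g r L) t = -g t / ∫ s in r..L, g s := by
  have hloc : capacitaryPotential g r L =ᶠ[nhds t]
      fun u => (∫ s in u..L, g s) / ∫ s in r..L, g s :=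
    Filter.eventually_of_mem (Ioi_mem_nhds ht.1) fun _ hs => capacitaryPotential_of_lt hs
  have hgt : IntervalIntegrable g volume t L :=
    (hg.mono (Icc_subset_Icc ht.1.le le_rfl)).intervalIntegrable_of_Icc ht.2.le
  have hprim : HasDerivAt (fun u => ∫ s in u..L, g s) (-g t) t :=
    integral_hasDerivAt_left hgt
      ((hg.mono Ioo_subset_Icc_self).stronglyMeasurableAtFilter isOpen_Ioo t ht)
      (hg.continuousAt (Icc_mem_nhds ht.1 ht.2))
  rw [hloc.deriv_eq, (hprim.div_const _).deriv]

theorem integral_mul_deriv_capacitaryPotential_sq (har : a ≤ r) (hrL : r ≤ L)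
    (hg : ContinuousOn g (Icc r L)) (hwg : ∀ t ∈ Ioo r L, w t * g t = 1) :
    ∫ t in a..L, w t * deriv (capacitaryPotential g r L) t ^ 2 = 1 / ∫ t in r..L, g t := by
  set D := ∫ t in r..L, g t
  have hleft : EqOn (fun _ => 0) (fun t => w t * deriv (capacitaryPotential g r L) t ^ 2)
      (Ioo a r) := fun t ht => by simp [deriv_capacitaryPotential_of_lt ht.2]
  have hright : EqOn (fun t => g t / D ^ 2)
      (fun t => w t * deriv (capacitaryPotential g r L) t ^ 2) (Ioo r L) := fun t ht => by
    simp only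
    rw [deriv_capacitaryPotential_of_mem_Ioo hg ht]
    linear_combination (-g t / D ^ 2) * hwg t ht
  have hg' : IntervalIntegrable (fun t => g t / D ^ 2) volume r L :=
    (hg.intervalIntegrable_of_Icc hrL).div_const _
  rw [← integral_add_adjacent_intervals
      (intervalIntegrable_const.congr_uIoo (uIoo_of_le har ▸ hleft))
      (hg'.congr_uIoo (uIoo_of_le hrL ▸ hright)),
    ← integral_congr_Ioo_of_le har hleft, ← integral_congr_Ioo_of_le hrL hright,
    intervalIntegral.integral_zero, intervalIntegral.integral_div, zero_add, sq,
    div_self_mul_self', one_div]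

theorem integral_le_integral_mul_capacitaryPotential_sq (har : a ≤ r) (hrL : r ≤ L)
    (hw : ContinuousOn w (Icc a L)) (hg : ContinuousOn g (Icc r L))
    (hw0 : ∀ t ∈ Icc r L, 0 ≤ w t) :
    ∫ t in a..r, w t ≤ ∫ t in a..L, w t * capacitaryPotential g r L t ^ 2 := by
  set D := ∫ t in r..L, g t
  have hleft : EqOn w (fun t => w t * capacitaryPotential g r L t ^ 2) (Ioo a r) :=
    fun t ht => by simp [capacitaryPotential_of_le ht.2.le]
  have hright : EqOn (fun t => w t * ((∫ s in t..L, g s) / D) ^ 2)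
      (fun t => w t * capacitaryPotential g r L t ^ 2) (Ioo r L) :=
    fun t ht => by simp only [capacitaryPotential_of_lt ht.1, D]
  have hprim : ContinuousOn (fun t => ∫ s in t..L, g s) (Icc r L) := by
    rw [← uIcc_of_le hrL] at hg ⊢
    exact continuousOn_primitive_interval_left hg.integrableOn_uIcc
  have hright_int :
      IntervalIntegrable (fun t => w t * ((∫ s in t..L, g s) / D) ^ 2) volume r L :=
    ((hw.mono (Icc_subset_Icc har le_rfl)).mul
      ((hprim.div_const D).pow 2)).intervalIntegrable_of_Icc hrL
  rw [← integral_add_adjacent_intervals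
      ((hw.mono (Icc_subset_Icc le_rfl hrL)).intervalIntegrable_of_Icc har
        |>.congr_uIoo (uIoo_of_le har ▸ hleft))
      (hright_int.congr_uIoo (uIoo_of_le hrL ▸ hright)),
    ← integral_congr_Ioo_of_le har hleft, ← integral_congr_Ioo_of_le hrL hright]
  exact le_add_of_nonneg_right
    (integral_nonneg hrL fun t ht => mul_nonneg (hw0 t ht) (sq_nonneg _))

theorem capacitaryPotential_rayleigh_quotient_le (har : a < r) (hrL : r < L)
    (hw : ContinuousOn w (Icc a L)) (hg : ContinuousOn g (Icc a L))
    (hw0 : ∀ t ∈ Icc a L, 0 < w t) (hwg : ∀ t ∈ Icc a L, w t * g t = 1) :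
    (∫ t in a..L, w t * deriv (capacitaryPotential g r L) t ^ 2) /
        (∫ t in a..L, w t * capacitaryPotential g r L t ^ 2) ≤
      (∫ t in a..r, g t) / ((r - a) ^ 2 * ∫ t in r..L, g t) := by
  have hg0 : ∀ t ∈ Icc a L, 0 < g t := fun t ht =>
    pos_of_mul_pos_right ((hwg t ht).symm ▸ one_pos) (hw0 t ht).le
  have har' : Icc a r ⊆ Icc a L := Icc_subset_Icc le_rfl hrL.le
  have hrL' : Icc r L ⊆ Icc a L := Icc_subset_Icc har.le le_rfl
  set A := ∫ t in a..r, g t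
  set D := ∫ t in r..L, g t
  have hgA : IntervalIntegrable g volume a r := (hg.mono har').intervalIntegrable_of_Icc har.le
  have hA : 0 < A := intervalIntegral_pos_of_pos_on hgA
    (fun t ht => hg0 t (har' (Ioo_subset_Icc_self ht))) har
  have hD : 0 < D := intervalIntegral_pos_of_pos_on
    ((hg.mono hrL').intervalIntegrable_of_Icc hrL.le)
    (fun t ht => hg0 t (hrL' (Ioo_subset_Icc_self ht))) hrL
  have hmass : (r - a) ^ 2 / A ≤ ∫ t in a..L, w t * capacitaryPotential g r L t ^ 2 :=
    calc (r - a) ^ 2 / A ≤ ∫ t in a..r, w t :=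
          (div_le_iff₀ hA).2 <| sq_sub_le_integral_mul_integral_of_mul_eq_one har.le
            ((hw.mono har').intervalIntegrable_of_Icc har.le) hgA
            (fun t ht => (hw0 t (har' ht)).le) (fun t ht => hwg t (har' ht))
      _ ≤ _ := integral_le_integral_mul_capacitaryPotential_sq har.le hrL.le hw (hg.mono hrL')
          fun t ht => (hw0 t (hrL' ht)).le
  rw [integral_mul_deriv_capacitaryPotential_sq har.le hrL.le (hg.mono hrL')
    fun t ht => hwg t (hrL' (Ioo_subset_Icc_self ht))]
  calc 1 / D / _ ≤ 1 / D / ((r - a) ^ 2 / A) :=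
        div_le_div_of_nonneg_left (by positivity) (by positivity) hmass
    _ = A / ((r - a) ^ 2 * D) := by field_simp

end

theorem rayleigh_quotient_estimate_general (L r : ℝ) (n : ℕ)
    (hr : 0 < r) (hrL : r < L)
    (h : ℝ → ℝ) (hc : ContinuousOn h (Set.Icc (0 : ℝ) L))
    (hpos : ∀ t ∈ Set.Icc (0 : ℝ) L, 0 < h t) :
    let φ : ℝ → ℝ := fun t =>
      if t ≤ r then 1
      else (∫ s in t..L, h s ^ ((1 : ℝ) - n)) / (∫ s in r..L, h s ^ ((1 : ℝ) - n))
    (∫ t in (0 : ℝ)..L, h t ^ ((n : ℝ) - 1) * (deriv φ t) ^ 2) /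
        (∫ t in (0 : ℝ)..L, h t ^ ((n : ℝ) - 1) * (φ t) ^ 2) ≤
      (∫ t in (0 : ℝ)..r, h t ^ ((1 : ℝ) - n)) /
        (r ^ 2 * ∫ t in r..L, h t ^ ((1 : ℝ) - n)) := by
  have hpow_cont (y : ℝ) : ContinuousOn (fun t => h t ^ y) (Icc 0 L) :=
    hc.rpow_const fun t ht => Or.inl (hpos t ht).ne'
  have hpow_mul : ∀ t ∈ Icc 0 L, h t ^ ((n : ℝ) - 1) * h t ^ ((1 : ℝ) - n) = 1 := by
    intro t ht
    rw [← Real.rpow_add (hpos t ht), sub_add_sub_cancel', sub_self, Real.rpow_zero]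
  have := capacitaryPotential_rayleigh_quotient_le hr hrL (hpow_cont _) (hpow_cont _)
    (fun t ht => Real.rpow_pos_of_pos (hpos t ht) _) hpow_mul
  rwa [sub_zero] at this

/-- Rayleigh quotient estimate for the test function `φ_r` on a warped product
collar `[0,L] ×_h Σ` of an `n`-dimensional manifold. -/
theorem rayleigh_quotient_estimate (L r : ℝ) (n : ℕ) (hn : 2 ≤ n)
    (hr : 0 < r) (hrL : r < L)
    (h : ℝ → ℝ) (hc : ContinuousOn h (Set.Icc (0 : ℝ) L))
    (hpos : ∀ t ∈ Set.Icc (0 : ℝ) L, 0 < h t) :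
    let φ : ℝ → ℝ := fun t =>
      if t ≤ r then 1
      else (∫ s in t..L, h s ^ ((1 : ℝ) - n)) / (∫ s in r..L, h s ^ ((1 : ℝ) - n))
    (∫ t in (0 : ℝ)..L, h t ^ ((n : ℝ) - 1) * (deriv φ t) ^ 2) /
        (∫ t in (0 : ℝ)..L, h t ^ ((n : ℝ) - 1) * (φ t) ^ 2) ≤
      (∫ t in (0 : ℝ)..r, h t ^ ((1 : ℝ) - n)) /
        (r ^ 2 * ∫ t in r..L, h t ^ ((1 : ℝ) - n)) :=
  rayleigh_quotient_estimate_general L r n hr hrL h hc hpos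
end

section
/- Let h : [0,L] → ℝ be continuous and positive, and let f : [0,L] → ℝ be continuously differentiable. Then f(0)² ≤ (2 / ∫_0^L h(s) ds) ∫_0^L f(t)² h(t) dt + 2 (∫_0^L h(s)^{-1} ds) ∫_0^L f'(t)² h(t) dt. -/
/-!
Write `f 0 = f t - ∫₀ᵗ f'`. The weighted Cauchy–Schwarz inequality
`(∫ g)² ≤ (∫ g² w) (∫ w⁻¹)`, which follows from `∫ (s g w + 1)² / w ≥ 0` for all `s`, bounds
`(∫₀ᵗ f')²` by `(∫₀ᴸ f'² h) (∫₀ᴸ h⁻¹)`, so `f(0)² ≤ 2 f(t)² + 2 (∫₀ᴸ h⁻¹) (∫₀ᴸ f'² h)` for every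
`t ∈ [0, L]`. Multiplying by `h t`, integrating over `[0, L]` and dividing by `∫₀ᴸ h` gives the
claim.
-/

open MeasureTheory intervalIntegral Set

theorem sq_integral_le_integral_sq_mul_mul_integral_inv {α : Type*} [MeasurableSpace α]
    {μ : Measure α} {g w : α → ℝ} (hw : ∀ᵐ x ∂μ, 0 < w x) (hg : Integrable g μ)
    (hgw : Integrable (fun x => g x ^ 2 * w x) μ) (hw_inv : Integrable (fun x => (w x)⁻¹) μ) :
    (∫ x, g x ∂μ) ^ 2 ≤ (∫ x, g x ^ 2 * w x ∂μ) * ∫ x, (w x)⁻¹ ∂μ := by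
  have quadratic_nonneg : ∀ s : ℝ,
      0 ≤ (∫ x, g x ^ 2 * w x ∂μ) * (s * s) + 2 * (∫ x, g x ∂μ) * s + ∫ x, (w x)⁻¹ ∂μ := by
    intro s
    have hpt : 0 ≤ᵐ[μ] fun x => s ^ 2 * (g x ^ 2 * w x) + 2 * s * g x + (w x)⁻¹ := by
      filter_upwards [hw] with x hx
      have hexpand : s ^ 2 * (g x ^ 2 * w x) + 2 * s * g x + (w x)⁻¹ =
          (s * g x * w x + 1) ^ 2 * (w x)⁻¹ := by
        linear_combination -(s ^ 2 * g x ^ 2 * w x + 2 * s * g x) * mul_inv_cancel₀ hx.ne'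
      simp only [Pi.zero_apply, hexpand]
      positivity
    have := integral_nonneg_of_ae hpt
    rw [integral_add (f := fun x => s ^ 2 * (g x ^ 2 * w x) + 2 * s * g x)
        ((hgw.const_mul _).add (hg.const_mul _)) hw_inv,
      integral_add (hgw.const_mul _) (hg.const_mul _), MeasureTheory.integral_const_mul,
      MeasureTheory.integral_const_mul] at this
    linarith
  have := discrim_le_zero quadratic_nonneg
  rw [discrim] at this
  nlinarith

theorem sq_sub_le_integral_sq_mul_mul_integral_inv {f f' w : ℝ → ℝ} {a b : ℝ} (hab : a ≤ b)
    (hderiv : ∀ t ∈ Icc a b, HasDerivAt f (f' t) t) (hf' : ContinuousOn f' (Icc a b))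
    (hw : ContinuousOn w (Icc a b)) (hw_pos : ∀ t ∈ Icc a b, 0 < w t) :
    (f b - f a) ^ 2 ≤ (∫ t in a..b, f' t ^ 2 * w t) * ∫ t in a..b, (w t)⁻¹ := by
  have hftc : ∫ t in a..b, f' t = f b - f a :=
    integral_eq_sub_of_hasDerivAt (fun t ht => hderiv t (uIcc_of_le hab ▸ ht))
      (hf'.intervalIntegrable_of_Icc hab)
  have hw_inv : ContinuousOn (fun t => (w t)⁻¹) (Icc a b) :=
    hw.inv₀ fun t ht => (hw_pos t ht).ne'
  rw [← hftc, integral_of_le hab, integral_of_le hab, integral_of_le hab]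
  exact sq_integral_le_integral_sq_mul_mul_integral_inv
    (ae_restrict_of_forall_mem measurableSet_Ioc fun t ht => hw_pos t (Ioc_subset_Icc_self ht))
    (hf'.intervalIntegrable_of_Icc hab).1
    (((hf'.pow 2).mul hw).intervalIntegrable_of_Icc hab).1
    (hw_inv.intervalIntegrable_of_Icc hab).1

theorem integral_le_integral_of_nonneg_of_le_right {g : ℝ → ℝ} {a t b : ℝ} (hat : a ≤ t)
    (htb : t ≤ b) (hg : ContinuousOn g (Icc a b)) (hg_nonneg : ∀ x ∈ Icc a b, 0 ≤ g x) :
    ∫ x in a..t, g x ≤ ∫ x in a..b, g x :=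
  integral_mono_interval le_rfl hat htb
    (ae_restrict_of_forall_mem measurableSet_Ioc fun x hx => hg_nonneg x (Ioc_subset_Icc_self hx))
    (hg.intervalIntegrable_of_Icc (hat.trans htb))

theorem sq_apply_left_le_of_mem_Icc {f f' w : ℝ → ℝ} {a b t : ℝ} (ht : t ∈ Icc a b)
    (hderiv : ∀ t ∈ Icc a b, HasDerivAt f (f' t) t) (hf' : ContinuousOn f' (Icc a b))
    (hw : ContinuousOn w (Icc a b)) (hw_pos : ∀ t ∈ Icc a b, 0 < w t) :
    f a ^ 2 ≤ 2 * f t ^ 2 +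
      2 * ((∫ s in a..b, (w s)⁻¹) * ∫ s in a..b, f' s ^ 2 * w s) := by
  have hsub : Icc a t ⊆ Icc a b := Icc_subset_Icc_right ht.2
  have hcs := sq_sub_le_integral_sq_mul_mul_integral_inv ht.1 (fun s hs => hderiv s (hsub hs))
    (hf'.mono hsub) (hw.mono hsub) fun s hs => hw_pos s (hsub hs)
  have henergy : ∫ s in a..t, f' s ^ 2 * w s ≤ ∫ s in a..b, f' s ^ 2 * w s :=
    integral_le_integral_of_nonneg_of_le_right ht.1 ht.2 ((hf'.pow 2).mul hw)
      fun s hs => mul_nonneg (sq_nonneg _) (hw_pos s hs).le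
  have hresistance : ∫ s in a..t, (w s)⁻¹ ≤ ∫ s in a..b, (w s)⁻¹ :=
    integral_le_integral_of_nonneg_of_le_right ht.1 ht.2 (hw.inv₀ fun s hs => (hw_pos s hs).ne')
      fun s hs => (inv_pos.mpr (hw_pos s hs)).le
  have henergy_nonneg : 0 ≤ ∫ s in a..t, f' s ^ 2 * w s :=
    integral_nonneg ht.1 fun s hs => mul_nonneg (sq_nonneg _) (hw_pos s (hsub hs)).le
  have hresistance_nonneg : 0 ≤ ∫ s in a..t, (w s)⁻¹ :=
    integral_nonneg ht.1 fun s hs => (inv_pos.mpr (hw_pos s (hsub hs))).le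
  nlinarith [sq_nonneg (2 * f t - f a), mul_le_mul henergy hresistance hresistance_nonneg
    (henergy_nonneg.trans henergy)]

theorem mul_integral_le_integral_mul_of_le {φ w : ℝ → ℝ} {a b c : ℝ} (hab : a ≤ b)
    (hw : IntervalIntegrable w volume a b)
    (hφw : IntervalIntegrable (fun t => φ t * w t) volume a b)
    (hw_nonneg : ∀ t ∈ Icc a b, 0 ≤ w t) (hle : ∀ t ∈ Icc a b, c ≤ φ t) :
    c * ∫ t in a..b, w t ≤ ∫ t in a..b, φ t * w t := by
  rw [← intervalIntegral.integral_const_mul]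
  exact integral_mono_on hab (hw.const_mul c) hφw fun t ht =>
    mul_le_mul_of_nonneg_right (hle t ht) (hw_nonneg t ht)

/-- One-dimensional trace inequality along a normal ray with volume density `h`:
`f(0)²` is controlled by the weighted `L²` norms of `f` and `f'`. -/
theorem trace_inequality_ray (L : ℝ) (hL : 0 < L)
    (h : ℝ → ℝ) (hc : ContinuousOn h (Set.Icc (0 : ℝ) L))
    (hpos : ∀ t ∈ Set.Icc (0 : ℝ) L, 0 < h t)
    (f f' : ℝ → ℝ)
    (hderiv : ∀ t ∈ Set.Icc (0 : ℝ) L, HasDerivAt f (f' t) t)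
    (hcont : ContinuousOn f' (Set.Icc (0 : ℝ) L)) :
    (f 0) ^ 2 ≤
      (2 / ∫ s in (0 : ℝ)..L, h s) * (∫ t in (0 : ℝ)..L, (f t) ^ 2 * h t) +
        2 * (∫ s in (0 : ℝ)..L, (h s)⁻¹) * (∫ t in (0 : ℝ)..L, (f' t) ^ 2 * h t) := by
  set A := ∫ s in (0 : ℝ)..L, (h s)⁻¹
  set B := ∫ t in (0 : ℝ)..L, (f' t) ^ 2 * h t
  have hf : ContinuousOn f (Icc 0 L) := fun t ht => (hderiv t ht).continuousAt.continuousWithinAt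
  have hh : IntervalIntegrable h volume 0 L := hc.intervalIntegrable_of_Icc hL.le
  have hf2h : IntervalIntegrable (fun t => f t ^ 2 * h t) volume 0 L :=
    ((hf.pow 2).mul hc).intervalIntegrable_of_Icc hL.le
  have hH : 0 < ∫ s in (0 : ℝ)..L, h s :=
    intervalIntegral_pos_of_pos_on hh (fun t ht => hpos t (Ioo_subset_Icc_self ht)) hL
  have hbound : f 0 ^ 2 * ∫ s in (0 : ℝ)..L, h s ≤
      ∫ t in (0 : ℝ)..L, (2 * f t ^ 2 + 2 * (A * B)) * h t :=
    mul_integral_le_integral_mul_of_le hL.le hh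
      (((continuousOn_const.mul (hf.pow 2)).add continuousOn_const).mul hc
        |>.intervalIntegrable_of_Icc hL.le)
      (fun t ht => (hpos t ht).le) fun t ht => sq_apply_left_le_of_mem_Icc ht hderiv hcont hc hpos
  have hlinear : ∫ t in (0 : ℝ)..L, (2 * f t ^ 2 + 2 * (A * B)) * h t =
      2 * (∫ t in (0 : ℝ)..L, f t ^ 2 * h t) + 2 * (A * B) * ∫ s in (0 : ℝ)..L, h s := by
    rw [← intervalIntegral.integral_const_mul 2 (fun t => f t ^ 2 * h t),
      ← intervalIntegral.integral_const_mul (2 * (A * B)) h,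
      ← integral_add (hf2h.const_mul 2) (hh.const_mul _)]
    congr 1 with t
    ring
  rw [div_mul_eq_mul_div, ← sub_le_iff_le_add, le_div_iff₀ hH]
  linarith
end
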